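/- arXiv:1404.4420 — 4 statements merged into one kernel-verified Lean document; each statement's English description precedes it below -/
import Mathlib

section
/- Let A, B ∈ M_N(ℂ). Then Σ_{k=1}^N |σ_k(A) − σ_k(B)| ≤ √( N · tr((A−B)(A−B)*) ). -/
open Matrix
/-- The decreasingly ordered eigenvalues of the Hermitian matrix `A * Aᴴ`. -/
noncomputable def evalsDesc {N : ℕ} (A : Matrix (Fin N) (Fin N) ℂ) : Fin N → ℝ :=
  fun k =>
    (Matrix.isHermitian_mul_conjTranspose_self A).eigenvalues
      (Tuple.sort (fun i => -(Matrix.isHermitian_mul_conjTranspose_self A).eigenvalues i) k)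

/-- The decreasingly ordered singular values `σ_1(A) ≥ ⋯ ≥ σ_N(A)` of a complex matrix `A`,
i.e. the decreasingly ordered nonnegative square roots of the eigenvalues of `A * Aᴴ`.
Here `svalsDesc A k` is `σ_{k+1}(A)` (indices are 0-based). -/
noncomputable def svalsDesc {N : ℕ} (A : Matrix (Fin N) (Fin N) ℂ) : Fin N → ℝ :=
  fun k => Real.sqrt (evalsDesc A k)

/-!
Expanding `tr((A - B)(A - B)*)`, the sum of squares `∑ (σ_k(A) - σ_k(B))²` is bounded by it as soon
as von Neumann's trace inequality `Re tr(A B*) ≤ ∑ σ_k(A) σ_k(B)` holds; Cauchy–Schwarz then gives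
the bound on `∑ |σ_k(A) - σ_k(B)|`. For von Neumann's inequality write `A = U_A Σ_A V_A` and
`B = U_B Σ_B V_B` with `Σ_A`, `Σ_B` decreasing (if `U_A` diagonalizes `A A*` with sorted
eigenvalues, the rows of `U_A* A` are orthogonal, hence a diagonal matrix times an orthonormal
basis), so that `Re tr(A B*) = Re tr(Σ_A P Σ_B Q)` with `P`, `Q` unitary. By AM–GM the
`(i, j)` term is at most `σ_i(A) σ_j(B) (|P_ij|² + |Q_ji|²) / 2`, and `(|P_ij|²)` is doubly
stochastic, so Birkhoff's theorem and the rearrangement inequality bound both halves by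
`∑ σ_k(A) σ_k(B)`.
-/

lemma Matrix.sum_mul_mul_le_of_mem_doublyStochastic {n : Type*} [Fintype n] [DecidableEq n]
    {f g : n → ℝ} (hfg : Monovary f g) {S : Matrix n n ℝ} (hS : S ∈ doublyStochastic ℝ n) :
    ∑ i, ∑ j, f i * g j * S i j ≤ ∑ i, f i * g i := by
  rw [← SetLike.mem_coe, doublyStochastic_eq_convexHull_permMatrix] at hS
  refine convexHull_min (t := {M | ∑ i, ∑ j, f i * g j * M i j ≤ ∑ i, f i * g i}) ?_
    (convex_halfSpace_le ?_ _) hS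
  · rintro _ ⟨σ, rfl⟩
    simpa [Equiv.Perm.permMatrix, PEquiv.toMatrix_apply, Equiv.toPEquiv_apply]
      using hfg.sum_mul_comp_perm_le_sum_mul (σ := σ)
  · exact ⟨fun M M' => by simp only [add_apply, mul_add, Finset.sum_add_distrib],
      fun c M => by
        simp only [smul_apply, smul_eq_mul, Finset.mul_sum]
        exact Finset.sum_congr rfl fun _ _ => Finset.sum_congr rfl fun _ _ => by ring⟩

lemma Matrix.norm_sq_entries_mem_doublyStochastic {𝕜 n : Type*} [RCLike 𝕜] [Fintype n]
    [DecidableEq n] {U : Matrix n n 𝕜} (hU : U ∈ unitaryGroup n 𝕜) :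
    (of fun i j => ‖U i j‖ ^ 2) ∈ doublyStochastic ℝ n := by
  rw [mem_doublyStochastic_iff_sum]
  refine ⟨fun _ _ => sq_nonneg _, fun i => ?_, fun j => ?_⟩
  · have hrow := congrFun (congrFun (mem_unitaryGroup_iff.1 hU) i) i
    simp only [mul_apply, star_apply, RCLike.star_def, RCLike.mul_conj, one_apply_eq] at hrow
    exact_mod_cast hrow
  · have hcol := congrFun (congrFun (mem_unitaryGroup_iff'.1 hU) j) j
    simp only [mul_apply, star_apply, RCLike.star_def, RCLike.conj_mul, one_apply_eq] at hcol
    exact_mod_cast hcol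

lemma Matrix.re_trace_diagonal_mul_mul_diagonal_mul_le {𝕜 n : Type*} [RCLike 𝕜] [Fintype n]
    [DecidableEq n] {a b : n → ℝ} (ha : 0 ≤ a) (hb : 0 ≤ b) (hab : Monovary a b)
    {P Q : Matrix n n 𝕜} (hP : P ∈ unitaryGroup n 𝕜) (hQ : Q ∈ unitaryGroup n 𝕜) :
    RCLike.re (diagonal (fun i => (a i : 𝕜)) * P * diagonal (fun i => (b i : 𝕜)) * Q).trace
      ≤ ∑ i, a i * b i := by
  have htrace : (diagonal (fun i => (a i : 𝕜)) * P * diagonal (fun i => (b i : 𝕜)) * Q).trace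
      = ∑ i, ∑ j, (a i : 𝕜) * P i j * b j * Q j i := by
    simp only [trace, diag_apply, mul_apply (M := diagonal _ * P * diagonal _), mul_diagonal,
      diagonal_mul]
  have hterm : ∀ i j, RCLike.re ((a i : 𝕜) * P i j * b j * Q j i)
      ≤ (a i * b j * ‖P i j‖ ^ 2 + a i * b j * ‖Q j i‖ ^ 2) / 2 := by
    intro i j
    have hab0 : 0 ≤ a i * b j := mul_nonneg (ha i) (hb j)
    calc RCLike.re ((a i : 𝕜) * P i j * b j * Q j i)
        ≤ ‖(a i : 𝕜) * P i j * b j * Q j i‖ := RCLike.re_le_norm _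
      _ = a i * b j * (‖P i j‖ * ‖Q j i‖) := by
        simp only [norm_mul, RCLike.norm_ofReal, abs_of_nonneg (ha i), abs_of_nonneg (hb j)]
        ring
      _ ≤ a i * b j * ((‖P i j‖ ^ 2 + ‖Q j i‖ ^ 2) / 2) := by
        gcongr
        nlinarith [sq_nonneg (‖P i j‖ - ‖Q j i‖)]
      _ = _ := by ring
  have hP' := sum_mul_mul_le_of_mem_doublyStochastic hab (norm_sq_entries_mem_doublyStochastic hP)
  have hQ' := sum_mul_mul_le_of_mem_doublyStochastic hab
    (norm_sq_entries_mem_doublyStochastic (transpose_mem_unitaryGroup_iff.2 hQ))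
  simp only [of_apply, transpose_apply] at hP' hQ'
  calc RCLike.re (diagonal (fun i => (a i : 𝕜)) * P * diagonal (fun i => (b i : 𝕜)) * Q).trace
      ≤ ∑ i, ∑ j, (a i * b j * ‖P i j‖ ^ 2 + a i * b j * ‖Q j i‖ ^ 2) / 2 := by
        rw [htrace, map_sum]
        exact Finset.sum_le_sum fun i _ => (map_sum _ _ _).trans_le
          (Finset.sum_le_sum fun j _ => hterm i j)
    _ = ((∑ i, ∑ j, a i * b j * ‖P i j‖ ^ 2) + ∑ i, ∑ j, a i * b j * ‖Q j i‖ ^ 2) / 2 := by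
        simp only [← Finset.sum_div, Finset.sum_add_distrib]
    _ ≤ ∑ i, a i * b i := by linarith

lemma exists_orthonormalBasis_eq_norm_smul {𝕜 E ι : Type*} [RCLike 𝕜] [NormedAddCommGroup E]
    [InnerProductSpace 𝕜 E] [FiniteDimensional 𝕜 E] [Fintype ι]
    (hcard : Module.finrank 𝕜 E = Fintype.card ι) {f : ι → E}
    (hf : Pairwise fun i j => inner 𝕜 (f i) (f j) = 0) :
    ∃ b : OrthonormalBasis ι 𝕜 E, ∀ i, f i = (‖f i‖ : 𝕜) • b i := by
  set s : Set ι := {i | f i ≠ 0}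
  have hon : Orthonormal 𝕜 (s.domRestrict fun i => (‖f i‖⁻¹ : 𝕜) • f i) := by
    refine ⟨fun i => norm_smul_inv_norm i.2, fun i j hij => ?_⟩
    simp [Set.domRestrict, inner_smul_left, inner_smul_right, hf (Subtype.coe_injective.ne hij)]
  obtain ⟨b, hb⟩ := hon.exists_orthonormalBasis_extension_of_card_eq hcard
  refine ⟨b, fun i => ?_⟩
  by_cases hi : f i = 0
  · simp [hi]
  · rw [hb i hi, smul_inv_smul₀ (by simpa using hi)]

lemma Matrix.exists_mem_unitaryGroup_eq_diagonal_sqrt_mul {𝕜 n : Type*} [RCLike 𝕜] [Fintype n]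
    [DecidableEq n] {W : Matrix n n 𝕜} {d : n → ℝ} (hW : W * Wᴴ = diagonal fun i => (d i : 𝕜)) :
    ∃ V ∈ unitaryGroup n 𝕜, W = diagonal (fun i => (√(d i) : 𝕜)) * V := by
  set f : n → EuclideanSpace 𝕜 n := fun i => WithLp.toLp 2 (W i)
  have hinner : ∀ i j, inner 𝕜 (f i) (f j) = (W * Wᴴ) j i := by
    intro i j
    simp [f, PiLp.inner_apply, mul_apply]
  have hnorm : ∀ i, ‖f i‖ = √(d i) := by
    intro i
    have hdiag := congrFun (congrFun hW i) i
    simp only [mul_apply, conjTranspose_apply, RCLike.star_def, RCLike.mul_conj,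
      diagonal_apply_eq] at hdiag
    rw [EuclideanSpace.norm_eq]
    congr 1
    exact_mod_cast hdiag
  obtain ⟨b, hb⟩ := exists_orthonormalBasis_eq_norm_smul (𝕜 := 𝕜) (by simp)
    (f := f) fun i j hij => by dsimp only; rw [hinner, hW, diagonal_apply_ne _ hij.symm]
  refine ⟨((EuclideanSpace.basisFun n 𝕜).toBasis.toMatrix b)ᵀ, transpose_mem_unitaryGroup_iff.2
    ((EuclideanSpace.basisFun n 𝕜).toMatrix_orthonormalBasis_mem_unitary b), ?_⟩
  ext i k
  have hentry := congrArg (fun v => v k) (hb i)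
  simp only [hnorm, algebraMap_smul, PiLp.smul_apply, f] at hentry
  simp [diagonal_mul, hentry, Module.Basis.toMatrix, RCLike.real_smul_eq_coe_mul]

lemma Matrix.IsHermitian.exists_star_mul_mul_eq_diagonal_eigenvalues_comp {𝕜 n : Type*}
    [RCLike 𝕜] [Fintype n] [DecidableEq n] {H : Matrix n n 𝕜} (hH : H.IsHermitian)
    (σ : Equiv.Perm n) :
    ∃ U ∈ unitaryGroup n 𝕜, star U * H * U = diagonal fun k => (hH.eigenvalues (σ k) : 𝕜) := by
  have hdiag := hH.conjStarAlgAut_star_eigenvectorUnitary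
  rw [Unitary.conjStarAlgAut_apply, Unitary.coe_star, star_star] at hdiag
  set U : Matrix n n 𝕜 := (hH.eigenvectorUnitary : Matrix n n 𝕜)
  have hU : U ∈ unitaryGroup n 𝕜 := hH.eigenvectorUnitary.2
  refine ⟨U.submatrix id σ, ?_, ?_⟩
  · rw [mem_unitaryGroup_iff, star_eq_conjTranspose, conjTranspose_submatrix,
      submatrix_mul_equiv, ← star_eq_conjTranspose, mem_unitaryGroup_iff.1 hU, submatrix_id_id]
  · calc star (U.submatrix id σ) * H * U.submatrix id σ = (star U * H * U).submatrix σ σ := by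
          rw [submatrix_mul _ _ _ id _ Function.bijective_id,
            submatrix_mul _ _ _ id _ Function.bijective_id, submatrix_id_id]
          rfl
      _ = _ := by rw [hdiag, submatrix_diagonal_equiv]; rfl

section SingularValues

variable {N : ℕ} (A : Matrix (Fin N) (Fin N) ℂ)

lemma sq_svalsDesc (k : Fin N) : svalsDesc A k ^ 2 = evalsDesc A k :=
  Real.sq_sqrt (eigenvalues_self_mul_conjTranspose_nonneg A _)

lemma svalsDesc_antitone : Antitone (svalsDesc A) := fun _ _ hkl =>
  Real.sqrt_le_sqrt <| neg_le_neg_iff.1 <|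
    Tuple.monotone_sort (fun i => -(isHermitian_mul_conjTranspose_self A).eigenvalues i) hkl

lemma sum_sq_svalsDesc : ∑ k, svalsDesc A k ^ 2 = (A * Aᴴ).trace.re := by
  simp_rw [sq_svalsDesc, (isHermitian_mul_conjTranspose_self A).trace_eq_sum_eigenvalues]
  rw [Complex.re_sum]
  exact Equiv.sum_comp (Tuple.sort _) fun i => (isHermitian_mul_conjTranspose_self A).eigenvalues i

lemma exists_eq_mul_diagonal_svalsDesc_mul :
    ∃ U ∈ unitaryGroup (Fin N) ℂ, ∃ V ∈ unitaryGroup (Fin N) ℂ,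
      A = U * diagonal (fun k => (svalsDesc A k : ℂ)) * V := by
  obtain ⟨U, hU, hdiag⟩ :=
    (isHermitian_mul_conjTranspose_self A).exists_star_mul_mul_eq_diagonal_eigenvalues_comp
      (Tuple.sort fun i => -(isHermitian_mul_conjTranspose_self A).eigenvalues i)
  obtain ⟨V, hV, hW⟩ := exists_mem_unitaryGroup_eq_diagonal_sqrt_mul (W := star U * A)
    (d := evalsDesc A) (by
      rw [conjTranspose_mul, star_eq_conjTranspose, conjTranspose_conjTranspose, ← mul_assoc,
        ← star_eq_conjTranspose, mul_assoc _ A]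
      exact hdiag)
  refine ⟨U, hU, V, hV, ?_⟩
  rw [mul_assoc]
  calc A = U * (star U * A) := by rw [← mul_assoc, mem_unitaryGroup_iff.1 hU, one_mul]
    _ = _ := by rw [hW]; rfl

lemma re_trace_mul_conjTranspose_le (B : Matrix (Fin N) (Fin N) ℂ) :
    (A * Bᴴ).trace.re ≤ ∑ k, svalsDesc A k * svalsDesc B k := by
  obtain ⟨Ua, hUa, Va, hVa, hA⟩ := exists_eq_mul_diagonal_svalsDesc_mul A
  obtain ⟨Ub, hUb, Vb, hVb, hB⟩ := exists_eq_mul_diagonal_svalsDesc_mul B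
  have hBH : Bᴴ = Vbᴴ * diagonal (fun k => (svalsDesc B k : ℂ)) * Ubᴴ := by
    conv_lhs => rw [hB]
    simp [conjTranspose_mul, mul_assoc, Pi.star_def]
  have htrace : (A * Bᴴ).trace = (diagonal (fun k => (svalsDesc A k : ℂ)) * (Va * Vbᴴ)
      * diagonal (fun k => (svalsDesc B k : ℂ)) * (Ubᴴ * Ua)).trace := by
    conv_lhs => rw [hA, hBH]
    simp only [mul_assoc]
    rw [trace_mul_comm]
    simp only [mul_assoc]
  rw [htrace]
  exact re_trace_diagonal_mul_mul_diagonal_mul_le (fun k => Real.sqrt_nonneg _)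
    (fun k => Real.sqrt_nonneg _) ((svalsDesc_antitone A).monovary (svalsDesc_antitone B))
    (mul_mem hVa (Unitary.star_mem hVb)) (mul_mem (Unitary.star_mem hUb) hUa)

lemma sum_sq_sub_svalsDesc_le (B : Matrix (Fin N) (Fin N) ℂ) :
    ∑ k, (svalsDesc A k - svalsDesc B k) ^ 2 ≤ ((A - B) * (A - B)ᴴ).trace.re := by
  have hBA : (B * Aᴴ).trace.re = (A * Bᴴ).trace.re := by
    rw [← conjTranspose_conjTranspose B, ← conjTranspose_mul, trace_conjTranspose,
      conjTranspose_conjTranspose]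
    exact Complex.conj_re _
  have hexpand : ((A - B) * (A - B)ᴴ).trace.re
      = (A * Aᴴ).trace.re - 2 * (A * Bᴴ).trace.re + (B * Bᴴ).trace.re := by
    simp only [conjTranspose_sub, sub_mul, mul_sub, trace_sub, Complex.sub_re, hBA]
    ring
  have hsum : ∑ k, (svalsDesc A k - svalsDesc B k) ^ 2
      = ∑ k, svalsDesc A k ^ 2 - 2 * ∑ k, svalsDesc A k * svalsDesc B k
        + ∑ k, svalsDesc B k ^ 2 := by
    simp only [sub_sq, Finset.sum_add_distrib, Finset.sum_sub_distrib, Finset.mul_sum, mul_assoc]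
  rw [hsum, hexpand, sum_sq_svalsDesc, sum_sq_svalsDesc]
  linarith [re_trace_mul_conjTranspose_le A B]

end SingularValues

/-- For `A, B ∈ M_N(ℂ)`,
`Σ_{k=1}^N |σ_k(A) − σ_k(B)| ≤ √(N · tr((A−B)(A−B)*))`. -/
theorem singularValue_diff_sum_le {N : ℕ} (A B : Matrix (Fin N) (Fin N) ℂ) :
    ∑ k : Fin N, |svalsDesc A k - svalsDesc B k|
      ≤ Real.sqrt ((N : ℝ) * (Matrix.trace ((A - B) * (A - B)ᴴ)).re) := by
  calc ∑ k, |svalsDesc A k - svalsDesc B k|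
      ≤ √(N * ∑ k, (svalsDesc A k - svalsDesc B k) ^ 2) := by
        refine Real.le_sqrt_of_sq_le ?_
        simpa [sq_abs] using sq_sum_le_card_mul_sum_sq (s := Finset.univ)
          (f := fun k => |svalsDesc A k - svalsDesc B k|)
    _ ≤ √(N * ((A - B) * (A - B)ᴴ).trace.re) :=
        Real.sqrt_le_sqrt (mul_le_mul_of_nonneg_left (sum_sq_sub_svalsDesc_le A B) N.cast_nonneg)
end

section
/- Let A ∈ M_N(ℂ) and 0 < γ < 1, and set X = exp_∘(iγA). Then the operator norm of X − 𝟏_N − iγA satisfies ‖X − 𝟏_N − iγA‖ ≤ γ² exp(‖A‖). -/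
open Matrix

/-- The operator norm (largest singular value) of a complex matrix, realized as the norm of
the induced linear operator on Euclidean space. -/
noncomputable def opNorm {m n : ℕ} (A : Matrix (Fin m) (Fin n) ℂ) : ℝ :=
  ‖LinearMap.toContinuousLinearMap (Matrix.toEuclideanLin A)‖

/-- The entrywise exponential of a complex matrix. -/
noncomputable def entrywiseExp {m n : ℕ} (A : Matrix (Fin m) (Fin n) ℂ) :
    Matrix (Fin m) (Fin n) ℂ :=
  Matrix.of fun k l => Complex.exp (A k l)

/-- The `N × N` all-ones matrix. -/
def allOnes (N : ℕ) : Matrix (Fin N) (Fin N) ℂ :=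
  Matrix.of fun _ _ => (1 : ℂ)

/-! Write `C = iγA`. Entrywise, `X - 𝟏 - C = ∑_{k ≥ 2} C^{∘k} / k!`, and the Schur product
inequality `‖A ⊙ B‖ ≤ ‖A‖ ‖B‖` gives `‖C^{∘k}‖ ≤ ‖C‖^k = (γ‖A‖)^k`. Hence the norm is at most
`exp (γ‖A‖) - 1 - γ‖A‖`, and comparing the power series termwise, `γ^k ≤ γ^2` for `k ≥ 2`,
bounds this by `γ^2 (exp ‖A‖ - 1 - ‖A‖)`. -/

open scoped Matrix.Norms.L2Operator Nat

namespace Matrix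

variable {𝕜 m n : Type*} [RCLike 𝕜] [Fintype m] [Fintype n] [DecidableEq n]

lemma sum_norm_mulVec_sq_le (A : Matrix m n 𝕜) (v : n → 𝕜) :
    ∑ i, ‖(A *ᵥ v) i‖ ^ 2 ≤ ‖A‖ ^ 2 * ∑ j, ‖v j‖ ^ 2 := by
  have h := pow_le_pow_left₀ (norm_nonneg _) (A.l2_opNorm_mulVec (WithLp.toLp 2 v)) 2
  simpa [mul_pow, EuclideanSpace.norm_sq_eq] using h

lemma l2_opNorm_le_of_sum_norm_mulVec_sq_le {A : Matrix m n 𝕜} {c : ℝ} (hc : 0 ≤ c)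
    (h : ∀ v, ∑ i, ‖(A *ᵥ v) i‖ ^ 2 ≤ c ^ 2 * ∑ j, ‖v j‖ ^ 2) : ‖A‖ ≤ c := by
  rw [l2_opNorm_def]
  refine ContinuousLinearMap.opNorm_le_bound _ hc fun x => ?_
  rw [← pow_le_pow_iff_left₀ (norm_nonneg _) (by positivity) two_ne_zero, mul_pow,
    EuclideanSpace.norm_sq_eq, EuclideanSpace.norm_sq_eq]
  exact h x.ofLp

lemma sum_norm_apply_sq_le (A : Matrix m n 𝕜) (j : n) : ∑ i, ‖A i j‖ ^ 2 ≤ ‖A‖ ^ 2 := by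
  simpa [mulVec_single, Pi.single_apply, apply_ite] using A.sum_norm_mulVec_sq_le (Pi.single j 1)

theorem l2_opNorm_hadamard_le (A B : Matrix m n 𝕜) : ‖A ⊙ B‖ ≤ ‖A‖ * ‖B‖ := by
  refine l2_opNorm_le_of_sum_norm_mulVec_sq_le (by positivity) fun v => ?_
  have hrow : ∀ i, ((A ⊙ B) *ᵥ v) i = (A *ᵥ fun j => B i j * v j) i := fun i => by
    simp only [mulVec, dotProduct, hadamard_apply, mul_assoc]
  -- bound row `i` by the whole vector `A *ᵥ (B i ⊙ v)`, sum over `i`, then use that every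
  -- column of `B` has `ℓ²` norm at most `‖B‖`
  calc ∑ i, ‖((A ⊙ B) *ᵥ v) i‖ ^ 2
      ≤ ∑ i, ∑ i', ‖(A *ᵥ fun j => B i' j * v j) i‖ ^ 2 := by
        refine Finset.sum_le_sum fun i _ => ?_
        rw [hrow]
        exact Finset.single_le_sum (f := fun i' => ‖(A *ᵥ fun j => B i' j * v j) i‖ ^ 2)
          (fun _ _ => by positivity) (Finset.mem_univ i)
    _ = ∑ i', ∑ i, ‖(A *ᵥ fun j => B i' j * v j) i‖ ^ 2 := Finset.sum_comm
    _ ≤ ∑ i', ‖A‖ ^ 2 * ∑ j, ‖B i' j * v j‖ ^ 2 :=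
        Finset.sum_le_sum fun i' _ => A.sum_norm_mulVec_sq_le _
    _ = ‖A‖ ^ 2 * ∑ j, (∑ i', ‖B i' j‖ ^ 2) * ‖v j‖ ^ 2 := by
        simp only [norm_mul, mul_pow, ← Finset.mul_sum, Finset.sum_mul]
        rw [Finset.sum_comm]
    _ ≤ ‖A‖ ^ 2 * ∑ j, ‖B‖ ^ 2 * ‖v j‖ ^ 2 := by
        gcongr with j
        exact B.sum_norm_apply_sq_le j
    _ = (‖A‖ * ‖B‖) ^ 2 * ∑ j, ‖v j‖ ^ 2 := by
        rw [← Finset.mul_sum]; ring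

theorem l2_opNorm_map_pow_le (A : Matrix m n 𝕜) {k : ℕ} (hk : k ≠ 0) :
    ‖A.map (· ^ k)‖ ≤ ‖A‖ ^ k := by
  induction k, Nat.one_le_iff_ne_zero.mpr hk using Nat.le_induction with
  | base => simp
  | succ k hk₁ ih =>
    have hsucc : A.map (· ^ (k + 1)) = A ⊙ A.map (· ^ k) := by
      ext i j
      simp [pow_succ']
    rw [hsucc, pow_succ']
    exact (l2_opNorm_hadamard_le _ _).trans (by gcongr; exact ih (Nat.one_le_iff_ne_zero.mp hk₁))

end Matrix

lemma opNorm_eq_l2_opNorm {m n : ℕ} (A : Matrix (Fin m) (Fin n) ℂ) : opNorm A = ‖A‖ := rfl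

theorem NormedSpace.hasSum_exp_sub_one_sub (𝕂 : Type*) {𝔸 : Type*} [NontriviallyNormedField 𝕂]
    [CharZero 𝕂] [ContinuousSMul ℚ 𝕂] [NormedRing 𝔸] [NormedAlgebra 𝕂 𝔸] [CompleteSpace 𝔸]
    (x : 𝔸) : HasSum (fun k => ((k + 2)!⁻¹ : 𝕂) • x ^ (k + 2)) (exp x - 1 - x) := by
  simpa [Finset.sum_range_succ, sub_sub] using
    (hasSum_nat_add_iff' 2).2 (exp_series_hasSum_exp' (𝕂 := 𝕂) x)

theorem Real.exp_mul_sub_one_sub_le {a t : ℝ} (ha : 0 ≤ a) (ht₀ : 0 ≤ t) (ht₁ : t ≤ 1) :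
    exp (t * a) - 1 - t * a ≤ t ^ 2 * (exp a - 1 - a) := by
  rw [exp_eq_exp_ℝ]
  refine hasSum_le (fun k => ?_) (NormedSpace.hasSum_exp_sub_one_sub ℝ (t * a))
    ((NormedSpace.hasSum_exp_sub_one_sub ℝ a).mul_left (t ^ 2))
  simp only [smul_eq_mul, mul_pow, pow_add t]
  have : t ^ k ≤ 1 := pow_le_one₀ ht₀ ht₁
  have : 0 ≤ ((k + 2)! : ℝ)⁻¹ * (t ^ 2 * a ^ (k + 2)) := by positivity
  nlinarith

theorem hasSum_entrywiseExp_sub_allOnes_sub {N : ℕ} (C : Matrix (Fin N) (Fin N) ℂ) :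
    HasSum (fun k => ((k + 2)!⁻¹ : ℂ) • C.map (· ^ (k + 2))) (entrywiseExp C - allOnes N - C) :=
  -- the L2 operator norm induces the product topology, so summation is entrywise
  Pi.hasSum.2 fun i => Pi.hasSum.2 fun j => by
    simpa [entrywiseExp, allOnes, Complex.exp_eq_exp_ℂ] using
      NormedSpace.hasSum_exp_sub_one_sub ℂ (C i j)

theorem norm_entrywiseExp_sub_allOnes_sub_le {N : ℕ} (C : Matrix (Fin N) (Fin N) ℂ) :
    ‖entrywiseExp C - allOnes N - C‖ ≤ Real.exp ‖C‖ - 1 - ‖C‖ := by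
  rw [Real.exp_eq_exp_ℝ]
  refine (hasSum_entrywiseExp_sub_allOnes_sub C).norm_le_of_bounded
    (NormedSpace.hasSum_exp_sub_one_sub ℝ ‖C‖) fun k => ?_
  rw [norm_smul, norm_inv, Complex.norm_natCast, smul_eq_mul]
  gcongr
  exact C.l2_opNorm_map_pow_le (Nat.succ_ne_zero _)

/-- for `A ∈ M_N(ℂ)` and `0 < γ < 1`, with `X = exp_∘(iγA)`,
`‖X − 𝟏_N − iγA‖ ≤ γ² exp(‖A‖)`. -/
theorem opNorm_entrywiseExp_sub_le {N : ℕ} (A : Matrix (Fin N) (Fin N) ℂ) (γ : ℝ)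
    (hγ0 : 0 < γ) (hγ1 : γ < 1) :
    opNorm (entrywiseExp ((Complex.I * (γ : ℂ)) • A) - allOnes N - (Complex.I * (γ : ℂ)) • A)
      ≤ γ ^ 2 * Real.exp (opNorm A) := by
  rw [opNorm_eq_l2_opNorm, opNorm_eq_l2_opNorm]
  have hnorm : ‖(Complex.I * (γ : ℂ)) • A‖ = γ * ‖A‖ := by
    rw [norm_smul, norm_mul, Complex.norm_I, one_mul, Complex.norm_real,
      Real.norm_of_nonneg hγ0.le]
  calc ‖entrywiseExp ((Complex.I * (γ : ℂ)) • A) - allOnes N - (Complex.I * (γ : ℂ)) • A‖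
      ≤ Real.exp (γ * ‖A‖) - 1 - γ * ‖A‖ :=
        hnorm ▸ norm_entrywiseExp_sub_allOnes_sub_le _
    _ ≤ γ ^ 2 * (Real.exp ‖A‖ - 1 - ‖A‖) :=
        Real.exp_mul_sub_one_sub_le (norm_nonneg A) hγ0.le hγ1.le
    _ ≤ γ ^ 2 * Real.exp ‖A‖ := by
        gcongr
        linarith [norm_nonneg A]
end

section
/- Let 𝒜 be a unital C*-algebra, φ : 𝒜 → ℂ a state, m ≥ 1 an integer and k ∈ {1,…,m}. Let r ∈ 𝒜 and let B ∈ M_m(ℂ) be invertible with ‖r‖·‖B^{-1}‖ < 1 and [B^{-1}]_{k,k} ≠ 0. Then the matrix B − r⊗E_{k,k} (the element of M_m(𝒜) whose (k,k) entry is B_{k,k}·1_𝒜 − r and whose other entries are B_{i,j}·1_𝒜) is invertible in M_m(𝒜), and E( (B − r⊗E_{k,k})^{-1} ) = B^{-1} + [B^{-1}]_{k,k}^{-2} ( G_r([B^{-1}]_{k,k}^{-1}) − [B^{-1}]_{k,k} ) · B^{-1} E_{k,k} B^{-1}. -/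
open Matrix
open scoped ComplexOrder

/-! With `P = B⁻¹` and `β = P k k`, the single-entry perturbation `B - r E_kk` has the
Sherman–Morrison inverse `P + P (s E_kk) P`, where `s = (1 - r β)⁻¹ r = r (1 - β r)⁻¹`.
Since `1 - β r = β (β⁻¹ - r)`, the corner `s` is `β⁻² (g - β)` for the resolvent
`g = (β⁻¹ - r)⁻¹`, which exists because `|β| ≤ ‖B⁻¹‖` gives `‖r‖ < |β⁻¹|`. Applying the state
entrywise then only sees `φ 1 = 1` and `φ g = G_r(β⁻¹)`. -/

lemma norm_entry_le_opNorm {m n : ℕ} (A : Matrix (Fin m) (Fin n) ℂ) (i : Fin m) (j : Fin n) :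
    ‖A i j‖ ≤ opNorm A := by
  have h := (LinearMap.toContinuousLinearMap (toEuclideanLin A)).le_opNorm
    (EuclideanSpace.single j 1)
  rw [PiLp.norm_single, norm_one, mul_one] at h
  calc ‖A i j‖ = ‖toEuclideanLin A (EuclideanSpace.single j 1) i‖ := by
        simp [toLpLin_apply, mulVec_single]
    _ ≤ ‖toEuclideanLin A (EuclideanSpace.single j 1)‖ := PiLp.norm_apply_le _ i
    _ ≤ opNorm A := h

section Resolvent

variable {𝕜 A : Type*} [NormedField 𝕜] [NormedRing A] [NormedAlgebra 𝕜 A] [CompleteSpace A]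

lemma isUnit_algebraMap_sub_of_norm_lt {ζ : 𝕜} {a : A} (h : ‖a‖ < ‖ζ‖) :
    IsUnit (algebraMap 𝕜 A ζ - a) := by
  have hζ : ζ ≠ 0 := norm_pos_iff.mp ((norm_nonneg a).trans_lt h)
  have hsmall : ‖ζ⁻¹ • a‖ < 1 := by
    rw [norm_smul, norm_inv, inv_mul_lt_iff₀ (norm_pos_iff.mpr hζ), mul_one]
    exact h
  have hfactor : algebraMap 𝕜 A ζ - a = algebraMap 𝕜 A ζ * (1 - ζ⁻¹ • a) := by
    rw [mul_sub, mul_one, ← Algebra.smul_def, smul_smul, mul_inv_cancel₀ hζ, one_smul]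
  rw [hfactor]
  exact ((isUnit_iff_ne_zero.mpr hζ).map (algebraMap 𝕜 A)).mul (Units.oneSub _ hsmall).isUnit

end Resolvent

section CornerEntry

variable {𝕜 A : Type*} [Field 𝕜] [Ring A] [Algebra 𝕜 A] {β : 𝕜} {r g : A}

lemma one_sub_mul_algebraMap_mul_inv_sq_smul (hβ : β ≠ 0)
    (hg : (algebraMap 𝕜 A β⁻¹ - r) * g = 1) :
    (1 - r * algebraMap 𝕜 A β) * ((β ^ 2)⁻¹ • (g - algebraMap 𝕜 A β)) = r := by
  have hfactor : 1 - r * algebraMap 𝕜 A β = β • (algebraMap 𝕜 A β⁻¹ - r) := by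
    rw [smul_sub, Algebra.smul_def, ← map_mul, mul_inv_cancel₀ hβ, map_one, ← Algebra.commutes,
      Algebra.smul_def]
  rw [hfactor, smul_mul_smul_comm, mul_sub, hg, sub_mul, ← map_mul, inv_mul_cancel₀ hβ, map_one,
    sub_sub_cancel, ← Algebra.commutes, ← Algebra.smul_def, smul_smul,
    show β * (β ^ 2)⁻¹ * β = 1 by field_simp, one_smul]

lemma inv_sq_smul_mul_one_sub_algebraMap_mul (hβ : β ≠ 0)
    (hg : g * (algebraMap 𝕜 A β⁻¹ - r) = 1) :
    ((β ^ 2)⁻¹ • (g - algebraMap 𝕜 A β)) * (1 - algebraMap 𝕜 A β * r) = r := by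
  have hfactor : 1 - algebraMap 𝕜 A β * r = β • (algebraMap 𝕜 A β⁻¹ - r) := by
    rw [smul_sub, Algebra.smul_def, ← map_mul, mul_inv_cancel₀ hβ, map_one, Algebra.smul_def]
  rw [hfactor, smul_mul_smul_comm, sub_mul, hg, mul_sub, ← map_mul, mul_inv_cancel₀ hβ, map_one,
    sub_sub_cancel, ← Algebra.smul_def, smul_smul,
    show (β ^ 2)⁻¹ * β * β = 1 by field_simp, one_smul]

end CornerEntry

section SingleEntryPerturbation

variable {n R : Type*} [Fintype n] [DecidableEq n] [Ring R] {B P : Matrix n n R} {k : n} {r s : R}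

lemma sub_single_mul_add_mul_single_mul (hBP : B * P = 1) (hs : (1 - r * P k k) * s = r) :
    (B - single k k r) * (P + P * single k k s * P) = 1 := by
  have hsplit : single k k s = single k k r + single k k (r * P k k * s) := by
    rw [sub_mul, one_mul, sub_eq_iff_eq_add] at hs
    rw [← single_add, ← hs]
  calc (B - single k k r) * (P + P * single k k s * P)
      = B * P + B * P * single k k s * P
          - (single k k r * P + single k k r * P * single k k s * P) := by
        simp only [sub_mul, mul_add, mul_assoc]
        abel
    _ = 1 + single k k s * P - (single k k r * P + single k k (r * P k k * s) * P) := by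
        rw [hBP, one_mul, single_mul_mul_single]
    _ = 1 := by
        rw [hsplit, add_mul]
        abel

lemma add_mul_single_mul_mul_sub_single (hPB : P * B = 1) (hs : s * (1 - P k k * r) = r) :
    (P + P * single k k s * P) * (B - single k k r) = 1 := by
  have hsplit : single k k s = single k k r + single k k (s * P k k * r) := by
    rw [mul_sub, mul_one, ← mul_assoc, sub_eq_iff_eq_add] at hs
    rw [← single_add, ← hs]
  calc (P + P * single k k s * P) * (B - single k k r)
      = P * B + P * (single k k s * P * B)
          - (P * single k k r + P * (single k k s * P * single k k r)) := by
        simp only [mul_sub, add_mul, mul_assoc]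
    _ = 1 + P * single k k s - (P * single k k r + P * single k k (s * P k k * r)) := by
        rw [hPB, mul_assoc _ P B, hPB, mul_one, single_mul_mul_single]
    _ = 1 := by
        rw [hsplit, mul_add]
        abel

end SingleEntryPerturbation

lemma Matrix.mul_single_mul_apply {n α : Type*} [Fintype n] [DecidableEq n]
    [NonUnitalNonAssocSemiring α]
    (X Y : Matrix n n α) (k : n) (c : α) (i j : n) :
    (X * single k k c * Y) i j = X i k * c * Y k j := by
  rw [mul_apply, Finset.sum_eq_single k
    (fun l _ hl => by rw [mul_single_apply_of_ne _ _ _ _ _ hl, zero_mul]) (by simp),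
    mul_single_apply_same]

section Expectation

variable {n 𝕜 A : Type*} [Fintype n] [DecidableEq n] [CommSemiring 𝕜] [Semiring A] [Algebra 𝕜 A]

lemma map_map_algebraMap_add_mul_single_mul (φ : A →ₗ[𝕜] 𝕜) (hφ : φ 1 = 1)
    (X Y : Matrix n n 𝕜) (k : n) (s : A) :
    (X.map (algebraMap 𝕜 A) +
        X.map (algebraMap 𝕜 A) * single k k s * Y.map (algebraMap 𝕜 A)).map φ =
      X + φ s • (X * single k k 1 * Y) := by
  ext i j
  simp only [map_apply, Matrix.add_apply, Matrix.smul_apply, mul_single_mul_apply,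
    Algebra.algebraMap_eq_smul_one, smul_mul_assoc, mul_smul_comm, one_mul, mul_one, map_add,
    map_smul, hφ, smul_eq_mul]
  ring

end Expectation

theorem cauchyTransform_rank_one_block_general
    {𝒜 : Type*} [NormedRing 𝒜]
    [NormedAlgebra ℂ 𝒜] [CompleteSpace 𝒜]
    (φ : 𝒜 →ₗ[ℂ] ℂ) (hφ1 : φ 1 = 1)
    {m : ℕ} (k : Fin m) (r : 𝒜)
    (B : Matrix (Fin m) (Fin m) ℂ) (hB : IsUnit B.det)
    (hnorm : ‖r‖ * opNorm B⁻¹ < 1) (hkk : B⁻¹ k k ≠ 0) :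
    IsUnit ((Matrix.of fun i j => algebraMap ℂ 𝒜 (B i j)) - Matrix.single k k r)
    ∧ (Matrix.of fun i j =>
        φ ((Ring.inverse
          ((Matrix.of fun i j => algebraMap ℂ 𝒜 (B i j)) - Matrix.single k k r)) i j))
      = B⁻¹ + (((B⁻¹ k k) ^ 2)⁻¹ *
          (φ (Ring.inverse (algebraMap ℂ 𝒜 (B⁻¹ k k)⁻¹ - r)) - B⁻¹ k k)) •
            (B⁻¹ * Matrix.single k k (1 : ℂ) * B⁻¹) := by
  set β := B⁻¹ k k
  set g := Ring.inverse (algebraMap ℂ 𝒜 β⁻¹ - r)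
  set s := (β ^ 2)⁻¹ • (g - algebraMap ℂ 𝒜 β)
  have hresolvent : IsUnit (algebraMap ℂ 𝒜 β⁻¹ - r) := by
    refine isUnit_algebraMap_sub_of_norm_lt ?_
    rw [norm_inv, ← one_div, lt_div_iff₀ (norm_pos_iff.mpr hkk)]
    exact (mul_le_mul_of_nonneg_left (norm_entry_le_opNorm B⁻¹ k k) (norm_nonneg r)).trans_lt
      hnorm
  set P := B⁻¹.map (algebraMap ℂ 𝒜) with hP
  have hBP : B.map (algebraMap ℂ 𝒜) * P = 1 := by
    rw [hP, ← Matrix.map_mul, mul_nonsing_inv B hB, Matrix.map_one _ (map_zero _) (map_one _)]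
  have hPB : P * B.map (algebraMap ℂ 𝒜) = 1 := by
    rw [hP, ← Matrix.map_mul, nonsing_inv_mul B hB, Matrix.map_one _ (map_zero _) (map_one _)]
  let U : (Matrix (Fin m) (Fin m) 𝒜)ˣ :=
    ⟨_, _, sub_single_mul_add_mul_single_mul hBP
      (one_sub_mul_algebraMap_mul_inv_sq_smul hkk (Ring.mul_inverse_cancel _ hresolvent)),
      add_mul_single_mul_mul_sub_single hPB
      (inv_sq_smul_mul_one_sub_algebraMap_mul hkk (Ring.inverse_mul_cancel _ hresolvent))⟩
  refine ⟨U.isUnit, ?_⟩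
  have hinv : Ring.inverse ((of fun i j => algebraMap ℂ 𝒜 (B i j)) - single k k r)
      = P + P * single k k s * P :=
    Ring.inverse_unit U
  have hcoeff : φ s = (β ^ 2)⁻¹ * (φ g - β) := by
    rw [map_smul, map_sub, Algebra.algebraMap_eq_smul_one, map_smul, hφ1, smul_eq_mul,
      smul_eq_mul, mul_one]
  rw [hinv, ← hcoeff]
  exact map_map_algebraMap_add_mul_single_mul φ hφ1 B⁻¹ B⁻¹ k s

/-- let `𝒜` be a unital C*-algebra, `φ : 𝒜 → ℂ` a state, `k ∈ {1,…,m}`,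
`r ∈ 𝒜`, and `B ∈ M_m(ℂ)` invertible with `‖r‖·‖B⁻¹‖ < 1` and `[B⁻¹]_{k,k} ≠ 0`.  Then
`B − r⊗E_{k,k}` is invertible in `M_m(𝒜)` and
`E((B − r⊗E_{k,k})⁻¹) = B⁻¹ + [B⁻¹]_{k,k}⁻² (G_r([B⁻¹]_{k,k}⁻¹) − [B⁻¹]_{k,k}) B⁻¹ E_{k,k} B⁻¹`,
where `E(X)` applies `φ` entrywise and `G_r(ζ) = φ((ζ·1 − r)⁻¹)` is the scalar Cauchy
transform of `r`. -/
theorem cauchyTransform_rank_one_block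
    {𝒜 : Type*} [NormedRing 𝒜] [StarRing 𝒜] [CStarRing 𝒜]
    [NormedAlgebra ℂ 𝒜] [CompleteSpace 𝒜] [StarModule ℂ 𝒜]
    (φ : 𝒜 →ₗ[ℂ] ℂ) (hφ1 : φ 1 = 1) (hφpos : ∀ a : 𝒜, 0 ≤ φ (star a * a))
    {m : ℕ} (hm : 1 ≤ m) (k : Fin m) (r : 𝒜)
    (B : Matrix (Fin m) (Fin m) ℂ) (hB : IsUnit B.det)
    (hnorm : ‖r‖ * opNorm B⁻¹ < 1) (hkk : B⁻¹ k k ≠ 0) :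
    IsUnit ((Matrix.of fun i j => algebraMap ℂ 𝒜 (B i j)) - Matrix.single k k r)
    ∧ (Matrix.of fun i j =>
        φ ((Ring.inverse
          ((Matrix.of fun i j => algebraMap ℂ 𝒜 (B i j)) - Matrix.single k k r)) i j))
      = B⁻¹ + (((B⁻¹ k k) ^ 2)⁻¹ *
          (φ (Ring.inverse (algebraMap ℂ 𝒜 (B⁻¹ k k)⁻¹ - r)) - B⁻¹ k k)) •
            (B⁻¹ * Matrix.single k k (1 : ℂ) * B⁻¹) :=
  cauchyTransform_rank_one_block_general φ hφ1 k r B hB hnorm hkk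
end

section
/- Let M ∈ M_n(ℂ). Then the following are equivalent: (i) for every diagonal matrix J ∈ M_n(ℂ), both M J M* and M* J M are diagonal; (ii) there exist a diagonal matrix D ∈ M_n(ℂ) and a permutation matrix P ∈ M_n(ℂ) such that M = D P. -/
open Matrix

/-- The permutation matrix `P` of a permutation `π`, with `P_{k,l} = 1` iff `l = π(k)`. -/
def permMatrixOf {n : ℕ} (π : Equiv.Perm (Fin n)) : Matrix (Fin n) (Fin n) ℂ :=
  Matrix.of fun k l => if l = π k then (1 : ℂ) else 0

private lemma tri1 {n : ℕ} (A : Matrix (Fin n) (Fin n) ℂ) (e : Fin n → ℂ) (i j : Fin n) :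
    (A * Matrix.diagonal e * Aᴴ) i j = ∑ a, A i a * e a * star (A j a) := by
  rw [Matrix.mul_apply]
  refine Finset.sum_congr rfl fun a _ => ?_
  rw [Matrix.mul_diagonal, Matrix.conjTranspose_apply]

private lemma tri2 {n : ℕ} (A : Matrix (Fin n) (Fin n) ℂ) (e : Fin n → ℂ) (i j : Fin n) :
    (Aᴴ * Matrix.diagonal e * A) i j = ∑ a, star (A a i) * e a * A a j := by
  rw [Matrix.mul_apply]
  refine Finset.sum_congr rfl fun a _ => ?_
  rw [Matrix.mul_diagonal, Matrix.conjTranspose_apply]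

private lemma dp_entry {n : ℕ} (d : Fin n → ℂ) (π : Equiv.Perm (Fin n)) (k l : Fin n) :
    (Matrix.diagonal d * permMatrixOf π) k l = if l = π k then d k else 0 := by
  rw [Matrix.diagonal_mul]
  simp [permMatrixOf, mul_ite]

/-- for `M ∈ M_n(ℂ)`, the following are equivalent: (i) for every diagonal
matrix `J`, both `M J M*` and `M* J M` are diagonal; (ii) `M = D P` for some diagonal
matrix `D` and permutation matrix `P`. -/
theorem diag_invariance_iff_diagonal_mul_permMatrix {n : ℕ} (M : Matrix (Fin n) (Fin n) ℂ) :
    (∀ d : Fin n → ℂ,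
        (M * Matrix.diagonal d * Mᴴ).IsDiag ∧ (Mᴴ * Matrix.diagonal d * M).IsDiag)
    ↔ ∃ (d : Fin n → ℂ) (π : Equiv.Perm (Fin n)),
        M = Matrix.diagonal d * permMatrixOf π := by
  constructor
  · intro h
    -- each column has at most one nonzero entry
    have hcol : ∀ m i j, M i m ≠ 0 → M j m ≠ 0 → i = j := by
      intro m i j hi hj
      by_contra hij
      have h1 := (h (Pi.single m 1)).1 hij
      dsimp only at h1
      rw [tri1] at h1
      rw [Finset.sum_eq_single m (fun b _ hb => by simp [Pi.single_apply, hb])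
        (fun hf => absurd (Finset.mem_univ m) hf)] at h1
      simp only [Pi.single_apply, eq_self_iff_true, if_true, mul_one] at h1
      rcases mul_eq_zero.mp h1 with h' | h'
      · exact hi h'
      · exact hj (star_eq_zero.mp h')
    -- each row has at most one nonzero entry
    have hrow : ∀ m i j, M m i ≠ 0 → M m j ≠ 0 → i = j := by
      intro m i j hi hj
      by_contra hij
      have h1 := (h (Pi.single m 1)).2 hij
      dsimp only at h1
      rw [tri2] at h1
      rw [Finset.sum_eq_single m (fun b _ hb => by simp [Pi.single_apply, hb])
        (fun hf => absurd (Finset.mem_univ m) hf)] at h1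
      simp only [Pi.single_apply, eq_self_iff_true, if_true, mul_one] at h1
      rcases mul_eq_zero.mp h1 with h' | h'
      · exact hi (star_eq_zero.mp h')
      · exact hj h'
    classical
    have key_q : ∀ (l₀ : Fin n) (hq : ∃ k', M k' l₀ ≠ 0) (k : Fin n),
        M k l₀ ≠ 0 → hq.choose = k := fun l₀ hq k hk => hcol l₀ _ k hq.choose_spec hk
    have key_p : ∀ (k₀ : Fin n) (hp : ∃ l', M k₀ l' ≠ 0) (l : Fin n),
        M k₀ l ≠ 0 → hp.choose = l := fun k₀ hp l hl => hrow k₀ _ l hp.choose_spec hl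
    let p : Fin n → Prop := fun k => ∃ l, M k l ≠ 0
    let q : Fin n → Prop := fun l => ∃ k, M k l ≠ 0
    let e : {k // p k} ≃ {l // q l} :=
      { toFun := fun k => ⟨k.2.choose, ⟨k.1, k.2.choose_spec⟩⟩
        invFun := fun l => ⟨l.2.choose, ⟨l.1, l.2.choose_spec⟩⟩
        left_inv := by
          rintro ⟨k, hk⟩
          apply Subtype.ext
          exact key_q _ _ _ hk.choose_spec
        right_inv := by
          rintro ⟨l, hl⟩
          apply Subtype.ext
          exact key_p _ _ _ hl.choose_spec }
    let π : Equiv.Perm (Fin n) := e.extendSubtype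
    refine ⟨fun k => M k (π k), π, ?_⟩
    ext k l
    rw [dp_entry]
    by_cases hk : p k
    · have hπ : π k = (e ⟨k, hk⟩ : Fin n) := e.extendSubtype_apply_of_mem k hk
      have hne : M k (π k) ≠ 0 := by rw [hπ]; exact hk.choose_spec
      by_cases hl : l = π k
      · rw [hl, if_pos rfl]
      · rw [if_neg hl]
        by_contra hMl
        exact hl (hrow k l (π k) hMl hne)
    · have hzero : ∀ l', M k l' = 0 := fun l' => by
        by_contra hc; exact hk ⟨l', hc⟩
      rw [hzero l, hzero (π k)]
      simp
  · rintro ⟨d, π, rfl⟩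
    intro e
    constructor
    · intro i j hij
      rw [tri1]
      refine Finset.sum_eq_zero fun a _ => ?_
      rw [dp_entry, dp_entry]
      by_cases hi : a = π i
      · have hj : a ≠ π j := fun hc => hij (π.injective (hi.symm.trans hc))
        rw [if_neg hj]
        simp
      · rw [if_neg hi]; simp
    · intro i j hij
      rw [tri2]
      refine Finset.sum_eq_zero fun a _ => ?_
      rw [dp_entry, dp_entry]
      by_cases hi : i = π a
      · have hj : j ≠ π a := fun hc => hij (hi.trans hc.symm)
        rw [if_neg hj]
        simp
      · rw [if_neg hi]; simp
end
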